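/- arXiv:0709.3242 — 2 statements merged into one kernel-verified Lean document; each statement's English description precedes it below -/
import Mathlib

section
/- The set of zero divisors (the null cone) of the bicomplex numbers equals {z·(i1 + i2) : z ∈ ℂ(i1)} ∪ {z·(i1 - i2) : z ∈ ℂ(i1)}. -/
/-- Bicomplex numbers `T = {z₁ + z₂·i₂ : z₁, z₂ ∈ ℂ(i₁)}`,
represented by their two `ℂ(i₁)`-components. -/
@[ext]
structure Bicomplex where
  z1 : ℂ
  z2 : ℂ

namespace Bicomplex

instance : Zero Bicomplex := ⟨⟨0, 0⟩⟩
instance : One Bicomplex := ⟨⟨1, 0⟩⟩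
instance : Add Bicomplex := ⟨fun a b => ⟨a.z1 + b.z1, a.z2 + b.z2⟩⟩
instance : Neg Bicomplex := ⟨fun a => ⟨-a.z1, -a.z2⟩⟩
instance : Mul Bicomplex :=
  ⟨fun a b => ⟨a.z1 * b.z1 - a.z2 * b.z2, a.z1 * b.z2 + a.z2 * b.z1⟩⟩

@[simp] theorem zero_z1 : (0 : Bicomplex).z1 = 0 := rfl
@[simp] theorem zero_z2 : (0 : Bicomplex).z2 = 0 := rfl
@[simp] theorem one_z1 : (1 : Bicomplex).z1 = 1 := rfl
@[simp] theorem one_z2 : (1 : Bicomplex).z2 = 0 := rfl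
@[simp] theorem add_z1 (a b : Bicomplex) : (a + b).z1 = a.z1 + b.z1 := rfl
@[simp] theorem add_z2 (a b : Bicomplex) : (a + b).z2 = a.z2 + b.z2 := rfl
@[simp] theorem neg_z1 (a : Bicomplex) : (-a).z1 = -a.z1 := rfl
@[simp] theorem neg_z2 (a : Bicomplex) : (-a).z2 = -a.z2 := rfl
@[simp] theorem mul_z1 (a b : Bicomplex) :
    (a * b).z1 = a.z1 * b.z1 - a.z2 * b.z2 := rfl
@[simp] theorem mul_z2 (a b : Bicomplex) :
    (a * b).z2 = a.z1 * b.z2 + a.z2 * b.z1 := rfl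

instance : CommRing Bicomplex where
  add_assoc a b c := by ext <;> simp <;> ring
  zero_add a := by ext <;> simp
  add_zero a := by ext <;> simp
  add_comm a b := by ext <;> simp <;> ring
  neg_add_cancel a := by ext <;> simp
  mul_assoc a b c := by ext <;> simp <;> ring
  one_mul a := by ext <;> simp
  mul_one a := by ext <;> simp
  left_distrib a b c := by ext <;> simp <;> ring
  right_distrib a b c := by ext <;> simp <;> ring
  mul_comm a b := by ext <;> simp <;> ring
  zero_mul a := by ext <;> simp
  mul_zero a := by ext <;> simp
  nsmul := nsmulRec
  zsmul := zsmulRec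

/-- The imaginary unit `i₁`. -/
def i1 : Bicomplex := ⟨Complex.I, 0⟩
/-- The imaginary unit `i₂`. -/
def i2 : Bicomplex := ⟨0, 1⟩
/-- The hyperbolic unit `j = i₁·i₂`. -/
def jj : Bicomplex := ⟨0, Complex.I⟩

/-- Embedding of `ℂ(i₁)` into the bicomplex numbers. -/
def ofC : ℂ →+* Bicomplex where
  toFun z := ⟨z, 0⟩
  map_one' := rfl
  map_mul' a b := by ext <;> simp
  map_zero' := rfl
  map_add' a b := by ext <;> simp

/-- Embedding of `ℝ` into the bicomplex numbers. -/
noncomputable def ofR : ℝ →+* Bicomplex := ofC.comp (algebraMap ℝ ℂ)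

@[simp] theorem ofC_z1 (z : ℂ) : (ofC z).z1 = z := rfl
@[simp] theorem ofC_z2 (z : ℂ) : (ofC z).z2 = 0 := rfl

/-- The first bicomplex conjugation: `(z₁ + z₂·i₂)^†₁ = conj z₁ + conj z₂ · i₂`. -/
def dag1 (w : Bicomplex) : Bicomplex :=
  ⟨(starRingEnd ℂ) w.z1, (starRingEnd ℂ) w.z2⟩

/-- The second bicomplex conjugation: `(z₁ + z₂·i₂)^†₂ = z₁ - z₂·i₂`. -/
def dag2 (w : Bicomplex) : Bicomplex := ⟨w.z1, -w.z2⟩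

/-- The third bicomplex conjugation: `(z₁ + z₂·i₂)^†₃ = conj z₁ - conj z₂ · i₂`. -/
def dag3 (w : Bicomplex) : Bicomplex :=
  ⟨(starRingEnd ℂ) w.z1, -(starRingEnd ℂ) w.z2⟩

/-- The idempotent `e₁ = (1+j)/2`. -/
noncomputable def e1 : Bicomplex := ⟨(1:ℂ)/2, Complex.I/2⟩
/-- The idempotent `e₂ = (1-j)/2`. -/
noncomputable def e2 : Bicomplex := ⟨(1:ℂ)/2, -(Complex.I/2)⟩

end Bicomplex

/-!
For `w = z₁ + z₂·i₂`, the product `w · w^†₂ = z₁² + z₂²` is a scalar in `ℂ(i₁)`. If it is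
nonzero it is cancellable, so `w` is not a zero divisor; if it vanishes, `w^†₂` (or `1` when
`w = 0`) is a nonzero element killed by `w`. Finally `z₁² + z₂² = (z₁ - i₁z₂)(z₁ + i₁z₂)`, and
`z₁ = i₁z₂` means `w = z₂(i₁ + i₂)`, while `z₁ = -i₁z₂` means `w = -z₂(i₁ - i₂)`.
-/

theorem sq_add_sq_eq_zero_iff {R : Type*} [CommRing R] [NoZeroDivisors R] {i : R}
    (hi : i ^ 2 = -1) (a b : R) : a ^ 2 + b ^ 2 = 0 ↔ a = i * b ∨ a = -(i * b) := by
  have hfactor : a ^ 2 + b ^ 2 = (a - i * b) * (a + i * b) := by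
    linear_combination b ^ 2 * hi
  rw [hfactor, mul_eq_zero, sub_eq_zero, add_eq_zero_iff_eq_neg]

namespace Bicomplex

@[simp] theorem sub_z1 (a b : Bicomplex) : (a - b).z1 = a.z1 - b.z1 := sub_eq_add_neg _ _ |>.symm
@[simp] theorem sub_z2 (a b : Bicomplex) : (a - b).z2 = a.z2 - b.z2 := sub_eq_add_neg _ _ |>.symm

theorem mul_dag2_self (w : Bicomplex) : w * dag2 w = ofC (w.z1 ^ 2 + w.z2 ^ 2) := by
  ext <;> simp only [mul_z1, mul_z2, dag2, ofC_z1, ofC_z2] <;> ring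

theorem dag2_ne_zero {w : Bicomplex} (hw : w ≠ 0) : dag2 w ≠ 0 := by
  contrapose! hw
  ext
  · simpa [dag2] using congrArg z1 hw
  · simpa [dag2] using congrArg z2 hw

theorem ofC_mul_eq_zero {z : ℂ} {v : Bicomplex} (h : ofC z * v = 0) : z = 0 ∨ v = 0 := by
  by_contra! hzv
  have h1 : z * v.z1 = 0 := by simpa using congrArg z1 h
  have h2 : z * v.z2 = 0 := by simpa using congrArg z2 h
  exact hzv.2 (Bicomplex.ext ((mul_eq_zero.1 h1).resolve_left hzv.1)
    ((mul_eq_zero.1 h2).resolve_left hzv.1))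

theorem exists_ne_zero_mul_eq_zero_iff (w : Bicomplex) :
    (∃ v : Bicomplex, v ≠ 0 ∧ w * v = 0) ↔ w.z1 ^ 2 + w.z2 ^ 2 = 0 := by
  constructor
  · rintro ⟨v, hv, hwv⟩
    have : ofC (w.z1 ^ 2 + w.z2 ^ 2) * v = 0 := by
      rw [← mul_dag2_self, mul_right_comm, hwv, zero_mul]
    exact (ofC_mul_eq_zero this).resolve_right hv
  · intro hw
    by_cases hw0 : w = 0
    · exact ⟨1, fun h => one_ne_zero (congrArg z1 h), by rw [hw0, zero_mul]⟩
    · exact ⟨dag2 w, dag2_ne_zero hw0, by rw [mul_dag2_self, hw, map_zero]⟩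

theorem ofC_mul_i1_add_i2 (z : ℂ) : ofC z * (i1 + i2) = ⟨Complex.I * z, z⟩ := by
  ext <;> simp [i1, i2, mul_comm]

theorem ofC_mul_i1_sub_i2 (z : ℂ) : ofC z * (i1 - i2) = ⟨Complex.I * z, -z⟩ := by
  ext <;> simp [i1, i2, mul_comm]

theorem exists_eq_ofC_mul_i1_add_i2_iff (w : Bicomplex) :
    (∃ z : ℂ, w = ofC z * (i1 + i2)) ↔ w.z1 = Complex.I * w.z2 := by
  simp only [ofC_mul_i1_add_i2, Bicomplex.ext_iff]
  exact ⟨fun ⟨z, h1, h2⟩ => h2 ▸ h1, fun h => ⟨w.z2, h, rfl⟩⟩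

theorem exists_eq_ofC_mul_i1_sub_i2_iff (w : Bicomplex) :
    (∃ z : ℂ, w = ofC z * (i1 - i2)) ↔ w.z1 = -(Complex.I * w.z2) := by
  simp only [ofC_mul_i1_sub_i2, Bicomplex.ext_iff]
  exact ⟨fun ⟨z, h1, h2⟩ => by rw [h1, h2]; ring,
    fun h => ⟨-w.z2, by rw [h]; ring, (neg_neg _).symm⟩⟩

end Bicomplex

open Bicomplex in
/-- The null cone (set of zero divisors) of the bicomplex numbers is
`{z·(i₁ + i₂) : z ∈ ℂ(i₁)} ∪ {z·(i₁ - i₂) : z ∈ ℂ(i₁)}`. -/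
theorem null_cone_eq :
    {w : Bicomplex | ∃ v : Bicomplex, v ≠ 0 ∧ w * v = 0} =
      {w : Bicomplex | ∃ z : ℂ, w = ofC z * (i1 + i2)} ∪
      {w : Bicomplex | ∃ z : ℂ, w = ofC z * (i1 - i2)} := by
  ext w
  rw [Set.mem_union, Set.mem_ofPred_eq, Set.mem_ofPred_eq, Set.mem_ofPred_eq,
    exists_ne_zero_mul_eq_zero_iff, exists_eq_ofC_mul_i1_add_i2_iff,
    exists_eq_ofC_mul_i1_sub_i2_iff, sq_add_sq_eq_zero_iff Complex.I_sq]
end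

section
/- For the bicomplex wave value ψ = e^{α + β·i1 + γ·i2 + δ·j} (α, β, γ, δ ∈ ℝ), written in the idempotent basis as ψ = ψ₊·e1 + ψ₋·e2 with ψ₊ = e^{(α+δ)+(β-γ)i1} and ψ₋ = e^{(α-δ)+(β+γ)i1}, the Euclidean norm satisfies |ψ|² = (|ψ₊|² + |ψ₋|²)/2 = e^{2α}·cosh(2δ). -/
namespace Bicomplex

open Complex

def plusPart (w : Bicomplex) : ℂ := w.z1 - w.z2 * I

def minusPart (w : Bicomplex) : ℂ := w.z1 + w.z2 * I

theorem eq_plusPart_mul_e1_add_minusPart_mul_e2 (w : Bicomplex) :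
    w = ofC w.plusPart * e1 + ofC w.minusPart * e2 := by
  ext <;> simp only [plusPart, minusPart, e1, e2, add_z1, add_z2, mul_z1, mul_z2, ofC_z1, ofC_z2]
  · ring
  · linear_combination w.z2 * I_sq

theorem norm_z1_sq_add_norm_z2_sq (w : Bicomplex) :
    ‖w.z1‖ ^ 2 + ‖w.z2‖ ^ 2 = (‖w.plusPart‖ ^ 2 + ‖w.minusPart‖ ^ 2) / 2 := by
  have h := parallelogram_law_with_norm ℂ w.z1 (w.z2 * I)
  rw [norm_mul, norm_I, mul_one] at h
  rw [plusPart, minusPart]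
  linarith

variable (a z : ℂ)

theorem plusPart_mul_cos_add_sin_mul_i2 :
    (ofC a * (ofC (cos z) + ofC (sin z) * i2)).plusPart = a * exp (-z * I) := by
  rw [exp_mul_I, cos_neg, sin_neg]
  simp only [plusPart, i2, mul_z1, mul_z2, add_z1, add_z2, ofC_z1, ofC_z2]
  ring

theorem minusPart_mul_cos_add_sin_mul_i2 :
    (ofC a * (ofC (cos z) + ofC (sin z) * i2)).minusPart = a * exp (z * I) := by
  rw [exp_mul_I]
  simp only [minusPart, i2, mul_z1, mul_z2, add_z1, add_z2, ofC_z1, ofC_z2]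
  ring

end Bicomplex

theorem Real.exp_add_sq_add_exp_sub_sq (a d : ℝ) :
    (Real.exp (a + d) ^ 2 + Real.exp (a - d) ^ 2) / 2 = Real.exp (2 * a) * Real.cosh (2 * d) := by
  rw [Real.cosh_eq, mul_div_assoc', mul_add, sq, sq, ← Real.exp_add, ← Real.exp_add,
    ← Real.exp_add, ← Real.exp_add]
  ring_nf

open Bicomplex in
/-- For `ψ = e^{α + β·i₁ + γ·i₂ + δ·j} = ψ₊·e₁ + ψ₋·e₂` with
`ψ₊ = e^{(α+δ)+(β-γ)i₁}`, `ψ₋ = e^{(α-δ)+(β+γ)i₁}`, the Euclidean norm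
satisfies `|ψ|² = (|ψ₊|² + |ψ₋|²)/2 = e^{2α}·cosh(2δ)`. -/
theorem born_formula_norm (α β γ δ : ℝ)
    (ψ : Bicomplex)
    (hψ : ψ = ofC (Complex.exp (α + β * Complex.I)) *
        (ofC (Complex.cos (γ + δ * Complex.I)) +
          ofC (Complex.sin (γ + δ * Complex.I)) * i2))
    (ψp ψm : ℂ)
    (hp : ψp = Complex.exp ((α + δ) + (β - γ) * Complex.I))
    (hm : ψm = Complex.exp ((α - δ) + (β + γ) * Complex.I)) :
    ψ = ofC ψp * e1 + ofC ψm * e2 ∧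
    ‖ψ.z1‖ ^ 2 + ‖ψ.z2‖ ^ 2 =
      (‖ψp‖ ^ 2 + ‖ψm‖ ^ 2) / 2 ∧
    ‖ψ.z1‖ ^ 2 + ‖ψ.z2‖ ^ 2 =
      Real.exp (2 * α) * Real.cosh (2 * δ) := by
  have hplus : ψ.plusPart = ψp := by
    rw [hψ, plusPart_mul_cos_add_sin_mul_i2, hp, ← Complex.exp_add]
    congr 1
    linear_combination (-δ : ℂ) * Complex.I_sq
  have hminus : ψ.minusPart = ψm := by
    rw [hψ, minusPart_mul_cos_add_sin_mul_i2, hm, ← Complex.exp_add]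
    congr 1
    linear_combination (δ : ℂ) * Complex.I_sq
  have hnorm := norm_z1_sq_add_norm_z2_sq ψ
  rw [hplus, hminus] at hnorm
  refine ⟨hplus ▸ hminus ▸ eq_plusPart_mul_e1_add_minusPart_mul_e2 ψ, hnorm, ?_⟩
  rw [hnorm, ← Real.exp_add_sq_add_exp_sub_sq, hp, hm, Complex.norm_exp, Complex.norm_exp]
  simp
end
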